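/- Suppose m = n. Assume the initial vector satisfies 0 < x̄(0) − x_1(0) ≤ η and, for every j ∈ {2,…,n}, |x_j(0) − x̄(0)| ≥ η + (x̄(0) − x_1(0))/(n−1). Then x_j(t) = x_j(0) for every j ≠ 1 and every t ≥ 0, and lim_{t→∞} x_1(t) = (1/(n−1)) ∑_{j=2}^n x_j(0). -/

import Mathlib

/-!
By induction on `t`, only node 1 ever moves. While the others sit at their initial values, with
mean `L`, one update of node 1 multiplies its gap `L - x_1` by `c = 1 - δ (n - 1) / n ∈ (0, 1)`,
so `x_1(t) = L - cᵗ (L - x_1(0))`. Since `x̄ - x_1 = (n - 1) / n · (L - x_1)`, the gap to the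
average stays in `(0, x̄(0) - x_1(0)] ⊆ (0, η]` and node 1 keeps updating; meanwhile
`x̄(t) - x̄(0) = (x_1(t) - x_1(0)) / n` stays below `(x̄(0) - x_1(0)) / (n - 1)`, so by the
separation hypothesis every other node stays more than `η` away from the average.
-/

open Filter MeasureTheory

/-- Average of a vector of `n` opinions. -/
noncomputable def cliqueAvg (n : ℕ) (x : Fin n → ℝ) : ℝ := (∑ j, x j) / (n : ℝ)

/-- Full-clique (`m = n`) bounded-confidence opinion dynamics with mixing parameter `δ`
and confidence level `η`, started from `x0`. -/
noncomputable def fcTraj (n : ℕ) (δ η : ℝ) (x0 : Fin n → ℝ) : ℕ → Fin n → ℝ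
  | 0 => x0
  | t + 1 => fun i =>
      if |fcTraj n δ η x0 t i - cliqueAvg n (fcTraj n δ η x0 t)| ≤ η then
        (1 - δ) * fcTraj n δ η x0 t i + δ * cliqueAvg n (fcTraj n δ η x0 t)
      else fcTraj n δ η x0 t i

open Finset

noncomputable def fcStep (n : ℕ) (δ η : ℝ) (x : Fin n → ℝ) : Fin n → ℝ := fun i =>
  if |x i - cliqueAvg n x| ≤ η then (1 - δ) * x i + δ * cliqueAvg n x else x i

noncomputable def othersAvg (n : ℕ) (x : Fin n → ℝ) (i : Fin n) : ℝ :=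
  (∑ j ∈ univ.erase i, x j) / ((n : ℝ) - 1)

noncomputable def fcRate (n : ℕ) (δ : ℝ) : ℝ := 1 - δ * (((n : ℝ) - 1) / n)

section Average

variable {n : ℕ} (x : Fin n → ℝ) (i : Fin n)

theorem cliqueAvg_eq_add_sum_erase :
    cliqueAvg n x = (x i + ∑ j ∈ univ.erase i, x j) / n := by
  rw [cliqueAvg, add_sum_erase _ _ (mem_univ i)]

theorem sum_erase_update (a : ℝ) :
    ∑ j ∈ univ.erase i, Function.update x i a j = ∑ j ∈ univ.erase i, x j :=
  sum_congr rfl fun _ hj => Function.update_of_ne (ne_of_mem_erase hj) _ _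

theorem othersAvg_update (a : ℝ) : othersAvg n (Function.update x i a) i = othersAvg n x i := by
  rw [othersAvg, othersAvg, sum_erase_update]

theorem cliqueAvg_update (a : ℝ) :
    cliqueAvg n (Function.update x i a) = cliqueAvg n x + (a - x i) / n := by
  rw [cliqueAvg_eq_add_sum_erase _ i, cliqueAvg_eq_add_sum_erase x i, sum_erase_update,
    Function.update_self]
  ring

theorem cliqueAvg_sub_apply (hn : 1 < n) :
    cliqueAvg n x - x i = ((n : ℝ) - 1) / n * (othersAvg n x i - x i) := by
  have hn1 : (n : ℝ) - 1 ≠ 0 := sub_ne_zero.mpr (by exact_mod_cast hn.ne')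
  rw [cliqueAvg_eq_add_sum_erase x i, othersAvg]
  field_simp
  ring

end Average

section Rate

variable {n : ℕ} {δ : ℝ}

theorem fcRate_pos (hδ1 : δ < 1) : 0 < fcRate n δ := by
  have hq0 : 0 ≤ ((n : ℝ) - 1) / n := by
    rcases n with _ | n
    · simp
    · exact div_nonneg (by simp) (Nat.cast_nonneg _)
  have hq1 : ((n : ℝ) - 1) / n ≤ 1 := div_le_one_of_le₀ (by linarith) (Nat.cast_nonneg n)
  rw [fcRate]
  rcases le_or_gt δ 0 with hδ | hδ <;> nlinarith

theorem fcRate_lt_one (hn : 1 < n) (hδ0 : 0 < δ) : fcRate n δ < 1 := by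
  have : 0 < ((n : ℝ) - 1) / n := div_pos (by simpa using hn) (by positivity)
  rw [fcRate]
  nlinarith

end Rate

section Dynamics

variable {n : ℕ} {δ η : ℝ}

theorem fcTraj_zero (x0 : Fin n → ℝ) : fcTraj n δ η x0 0 = x0 :=
  rfl

theorem fcTraj_succ (x0 : Fin n → ℝ) (t : ℕ) :
    fcTraj n δ η x0 (t + 1) = fcStep n δ η (fcTraj n δ η x0 t) :=
  rfl

theorem fcStep_apply_of_abs_le {x : Fin n → ℝ} {i : Fin n} (h : |x i - cliqueAvg n x| ≤ η) :
    fcStep n δ η x i = x i + δ * (cliqueAvg n x - x i) := by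
  rw [fcStep, if_pos h]
  ring

theorem fcStep_apply_of_lt_abs {x : Fin n → ℝ} {i : Fin n} (h : η < |x i - cliqueAvg n x|) :
    fcStep n δ η x i = x i :=
  if_neg h.not_ge

theorem othersAvg_sub_fcStep_of_abs_le (hn : 1 < n) {x : Fin n → ℝ} {i : Fin n}
    (h : |x i - cliqueAvg n x| ≤ η) :
    othersAvg n x i - fcStep n δ η x i = fcRate n δ * (othersAvg n x i - x i) := by
  rw [fcStep_apply_of_abs_le h, cliqueAvg_sub_apply x i hn, fcRate]
  ring

theorem fcStep_apply_of_dist_lt {x : Fin n → ℝ} {j : Fin n} {c : ℝ}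
    (h : η + |cliqueAvg n x - c| < |x j - c|) : fcStep n δ η x j = x j := by
  refine fcStep_apply_of_lt_abs ?_
  have htri := abs_sub_le (x j) (cliqueAvg n x) c
  linarith

theorem fcStep_update_othersAvg_sub (hn : 1 < n) (x0 : Fin n → ℝ) (i : Fin n)
    (h1 : 0 < cliqueAvg n x0 - x0 i) (h2 : cliqueAvg n x0 - x0 i ≤ η)
    (hsep : ∀ j, j ≠ i → η + (othersAvg n x0 i - x0 i) / n ≤ |x0 j - cliqueAvg n x0|)
    {s : ℝ} (hs0 : 0 < s) (hs1 : s ≤ 1) :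
    fcStep n δ η (Function.update x0 i (othersAvg n x0 i - s * (othersAvg n x0 i - x0 i))) =
      Function.update x0 i (othersAvg n x0 i - fcRate n δ * s * (othersAvg n x0 i - x0 i)) := by
  set q : ℝ := ((n : ℝ) - 1) / n
  set L := othersAvg n x0 i
  set e := L - x0 i
  have hn0 : (0 : ℝ) < n := by positivity
  have hq0 : 0 < q := div_pos (by simpa using hn) hn0
  have hgap0 : cliqueAvg n x0 - x0 i = q * e := cliqueAvg_sub_apply x0 i hn
  have he : 0 < e := pos_of_mul_pos_right (hgap0 ▸ h1) hq0.le
  set x := Function.update x0 i (L - s * e)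
  ext j
  rcases eq_or_ne j i with rfl | hj
  · have hgap : cliqueAvg n x - x j = q * (s * e) := by
      simpa [x, othersAvg_update, L] using cliqueAvg_sub_apply x j hn
    have hmoves : |x j - cliqueAvg n x| ≤ η := by
      rw [abs_sub_comm, abs_of_nonneg (by rw [hgap]; positivity), hgap]
      calc q * (s * e) ≤ q * e := by gcongr; exact mul_le_of_le_one_left he.le hs1
        _ ≤ η := hgap0 ▸ h2
    have hstep := othersAvg_sub_fcStep_of_abs_le (δ := δ) hn hmoves
    simp only [x, othersAvg_update, Function.update_self] at hstep ⊢
    linarith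
  · have hdrift : |cliqueAvg n x - cliqueAvg n x0| < e / n := by
      rw [cliqueAvg_update, add_sub_cancel_left,
        show L - s * e - x0 i = (1 - s) * e by ring,
        abs_of_nonneg (by have := sub_nonneg.2 hs1; positivity)]
      exact div_lt_div_of_pos_right (by nlinarith) hn0
    have hxj : x j = x0 j := Function.update_of_ne hj _ _
    rw [Function.update_of_ne hj, ← hxj]
    exact fcStep_apply_of_dist_lt (c := cliqueAvg n x0) (by rw [hxj]; linarith [hsep j hj])

theorem fcTraj_eq_update (hn : 1 < n) (hδ0 : 0 < δ) (hδ1 : δ < 1) (x0 : Fin n → ℝ) (i : Fin n)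
    (h1 : 0 < cliqueAvg n x0 - x0 i) (h2 : cliqueAvg n x0 - x0 i ≤ η)
    (h3 : ∀ j, j ≠ i → η + (cliqueAvg n x0 - x0 i) / ((n : ℝ) - 1) ≤ |x0 j - cliqueAvg n x0|)
    (t : ℕ) :
    fcTraj n δ η x0 t = Function.update x0 i
      (othersAvg n x0 i - fcRate n δ ^ t * (othersAvg n x0 i - x0 i)) := by
  have hsep : ∀ j, j ≠ i → η + (othersAvg n x0 i - x0 i) / n ≤ |x0 j - cliqueAvg n x0| := by
    intro j hj
    convert h3 j hj using 2
    have : (n : ℝ) - 1 ≠ 0 := sub_ne_zero.mpr (by exact_mod_cast hn.ne')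
    rw [cliqueAvg_sub_apply x0 i hn]
    field_simp
  induction t with
  | zero => simp [fcTraj_zero]
  | succ t ih =>
    rw [fcTraj_succ, ih, fcStep_update_othersAvg_sub hn x0 i h1 h2 hsep
      (pow_pos (fcRate_pos hδ1) t) (pow_le_one₀ (fcRate_pos hδ1).le (fcRate_lt_one hn hδ0).le),
      pow_succ', mul_assoc]

end Dynamics

/-- for `m = n`, if `0 < x̄(0) − x_1(0) ≤ η` and every other node's initial
opinion is at distance at least `η + (x̄(0) − x_1(0))/(n−1)` from the average, then all nodes
other than node 1 keep their initial values forever, and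
`x_1(t) → (1/(n−1)) ∑_{j≥2} x_j(0)`. -/
theorem stmt7 (n : ℕ) (hn : 2 ≤ n) (δ η : ℝ) (hδ0 : 0 < δ) (hδ1 : δ < 1)
    (x0 : Fin n → ℝ)
    (h1 : 0 < cliqueAvg n x0 - x0 ⟨0, by omega⟩)
    (h2 : cliqueAvg n x0 - x0 ⟨0, by omega⟩ ≤ η)
    (h3 : ∀ j : Fin n, j ≠ ⟨0, by omega⟩ →
      η + (cliqueAvg n x0 - x0 ⟨0, by omega⟩) / ((n : ℝ) - 1) ≤ |x0 j - cliqueAvg n x0|) :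
    (∀ j : Fin n, j ≠ ⟨0, by omega⟩ → ∀ t : ℕ, fcTraj n δ η x0 t j = x0 j) ∧
    Tendsto (fun t => fcTraj n δ η x0 t ⟨0, by omega⟩) atTop
      (nhds ((∑ j ∈ Finset.univ.erase (⟨0, by omega⟩ : Fin n), x0 j) / ((n : ℝ) - 1))) := by
  have htraj := fcTraj_eq_update hn hδ0 hδ1 x0 _ h1 h2 h3
  refine ⟨fun j hj t => by rw [htraj t, Function.update_of_ne hj], ?_⟩
  simp only [htraj, Function.update_self]
  have hrate := tendsto_pow_atTop_nhds_zero_of_lt_one (fcRate_pos hδ1).le (fcRate_lt_one hn hδ0)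
  simpa [othersAvg] using (hrate.mul_const (othersAvg n x0 _ - x0 _)).const_sub (othersAvg n x0 _)
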